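/- Let K be a compact subset of ℂ with ℂ \ K connected and with nonempty interior, and let z₁ and z₂ be two distinct points of ∂K, each of which is a type I boundary point and circularly accessible. Then there exists g ∈ A(K) such that: sup_{z ∈ K} |g(z)| = 1; g is injective on K and injective holomorphic on the interior of K; g(z₁) = 1 and g(z₂) = 0; and g(K \ {z₁, z₂}) is contained in the open disk D(1/2;1/2), so that g(K) ⊆ {0, 1} ∪ D(1/2;1/2). -/

import Mathlib

/-!
Join `z₁` to `z₂` by a polygonal path whose only points in `K` are its endpoints: a segment
inside each accessibility disk, and in between a polygonal path in the open connected set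
`ℂ \ K`. Adding up principal logarithms of `(z - y) / (z - y')` over the edges `[y, y']` of the
path gives, off the path, a holomorphic logarithm `L` of `(z - z₁) / (z - z₂)` with
`|Im L| ≤ n π`, where `n` is the number of edges. Hence `h = exp (L / (2n + 1))` is a root of
the Möbius map `(z - z₁) / (z - z₂)` with positive real part, so it is injective, and
`g = 1 / (1 + h)` maps `K \ {z₁, z₂}` into `D(1/2; 1/2)`. Since `h → 0` at `z₁` and `h → ∞`
at `z₂`, setting `g z₁ = 1` and `g z₂ = 0` makes `g` continuous on `K`.
-/

open Complex Set Metric Filter Topology Relation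
open scoped Real

section PolygonalPath

variable {E : Type*} [NormedAddCommGroup E] [NormedSpace ℝ E]

/-- `ReflTransGen (fun x y => segment ℝ x y ⊆ U) a b` says that a polygonal path in `U` joins
`a` to `b`. -/
theorem IsPreconnected.reflTransGen_segment_subset {U : Set E} (hU : IsOpen U)
    (hUc : IsPreconnected U) {a b : E} (ha : a ∈ U) (hb : b ∈ U) :
    ReflTransGen (fun x y => segment ℝ x y ⊆ U) a b := by
  refine hUc.induction₂' _ (fun x hx => ?_) (fun _ _ _ _ _ _ => ReflTransGen.trans) ha hb
  obtain ⟨ε, hε, hball⟩ := Metric.isOpen_iff.1 hU x hx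
  filter_upwards [mem_nhdsWithin_of_mem_nhds (ball_mem_nhds x hε)] with y hy
  have hxy : segment ℝ x y ⊆ U :=
    ((convex_ball x ε).segment_subset (mem_ball_self hε) hy).trans hball
  exact ⟨.single hxy, .single (segment_symm ℝ x y ▸ hxy)⟩

variable [Nontrivial E] {K : Set E} {c z : E} {r : ℝ}

theorem exists_ne_mem_closedBall (hr : 0 < r) (z : E) : ∃ p ∈ closedBall c r, p ≠ z := by
  obtain ⟨v, hv⟩ := exists_norm_eq E hr.le
  by_cases hc : c = z
  · refine ⟨c + v, by simp [hv], fun h => ?_⟩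
    rw [← hc, add_eq_left] at h
    simp [h, hr.ne] at hv
  · exact ⟨c, mem_closedBall_self hr.le, hc⟩

theorem exists_notMem_segment_inter_subset (hr : 0 < r) (h : closedBall c r ∩ K = {z}) :
    ∃ p ∉ K, segment ℝ z p ∩ K ⊆ {z} := by
  have hz : z ∈ closedBall c r := (h.ge (mem_singleton z)).1
  obtain ⟨p, hp, hpz⟩ := exists_ne_mem_closedBall (c := c) hr z
  refine ⟨p, fun hpK => hpz (h.subset ⟨hp, hpK⟩), ?_⟩
  rw [← h]
  exact inter_subset_inter_left K ((convex_closedBall c r).segment_subset hz hp)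

theorem notMem_interior_of_closedBall_inter_eq (hr : 0 < r) (h : closedBall c r ∩ K = {z}) :
    z ∉ interior K := by
  obtain ⟨p, hp, hzp⟩ := exists_notMem_segment_inter_subset hr h
  rw [← mem_compl_iff, ← closure_compl]
  refine closure_mono (fun x hx hxK => ?_)
    (segment_subset_closure_openSegment (left_mem_segment ℝ z p))
  obtain rfl : x = z := hzp ⟨openSegment_subset_segment ℝ z p hx, hxK⟩
  exact hp (left_mem_openSegment_iff.1 hx ▸ hxK)

theorem reflTransGen_segment_subset_compl_diff_pair (hK : IsClosed K)
    (hKc : IsPreconnected Kᶜ) {c₁ c₂ z₁ z₂ : E} {r₁ r₂ : ℝ} (hr₁ : 0 < r₁) (hr₂ : 0 < r₂)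
    (h₁ : closedBall c₁ r₁ ∩ K = {z₁}) (h₂ : closedBall c₂ r₂ ∩ K = {z₂}) :
    ReflTransGen (fun x y => segment ℝ x y ⊆ (K \ {z₁, z₂})ᶜ) z₁ z₂ := by
  obtain ⟨p₁, hp₁, hseg₁⟩ := exists_notMem_segment_inter_subset hr₁ h₁
  obtain ⟨p₂, hp₂, hseg₂⟩ := exists_notMem_segment_inter_subset hr₂ h₂
  have hmid : ReflTransGen (fun x y => segment ℝ x y ⊆ (K \ {z₁, z₂})ᶜ) p₁ p₂ :=
    ReflTransGen.mono
      (fun x y (hxy : segment ℝ x y ⊆ Kᶜ) => hxy.trans (compl_subset_compl.2 sdiff_subset))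
      _ _ (hKc.reflTransGen_segment_subset hK.isOpen_compl hp₁ hp₂)
  refine ((ReflTransGen.single ?_).trans hmid).tail ?_
  · exact fun x hx ⟨hxK, hx12⟩ => hx12 (Or.inl (hseg₁ ⟨hx, hxK⟩))
  · rw [segment_symm]
    exact fun x hx ⟨hxK, hx12⟩ => hx12 (Or.inr (hseg₂ ⟨hx, hxK⟩))

end PolygonalPath

theorem sub_div_sub_mem_slitPlane {z p q : ℂ} (h : z ∉ segment ℝ p q) :
    (z - p) / (z - q) ∈ slitPlane := by
  rw [mem_segment_iff_sameRay, sameRay_iff_arg_div_eq_zero, arg_eq_zero_iff,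
    ← neg_sub z q, div_neg, neg_re, neg_im] at h
  rw [mem_slitPlane_iff]
  by_contra! h'
  exact h ⟨by linarith [h'.1], by simp [h'.2]⟩

theorem injOn_sub_div_sub {a b : ℂ} (hab : a ≠ b) :
    InjOn (fun z => (z - a) / (z - b)) {b}ᶜ := by
  intro u hu v hv huv
  simp only [div_eq_div_iff (sub_ne_zero.2 hu) (sub_ne_zero.2 hv)] at huv
  have : (a - b) * (u - v) = 0 := by linear_combination huv
  exact sub_eq_zero.1 ((mul_eq_zero.1 this).resolve_left (sub_ne_zero.2 hab))

/-- `L` is the sum of the principal logarithms of `(z - y) / (z - y')` over the edges `[y, y']`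
of the path, and `n` is the number of edges. -/
theorem exists_log_sub_div_sub_of_reflTransGen {W : Set ℂ} {a b : ℂ} (ha : a ∉ W)
    (hab : ReflTransGen (fun x y => segment ℝ x y ⊆ Wᶜ) a b) :
    ∃ (L : ℂ → ℂ) (n : ℕ), ∀ z ∈ W, DifferentiableAt ℂ L z ∧
      exp (L z) = (z - a) / (z - b) ∧ |(L z).im| ≤ n * π := by
  induction hab with
  | refl =>
    refine ⟨0, 0, fun z hz => ⟨differentiableAt_const 0, ?_, by simp⟩⟩
    rw [div_self (sub_ne_zero.2 (ne_of_mem_of_not_mem hz ha))]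
    simp
  | @tail b c _ hbc ih =>
    obtain ⟨L, n, hL⟩ := ih
    refine ⟨fun z => L z + log ((z - b) / (z - c)), n + 1, fun z hz => ?_⟩
    obtain ⟨hLd, hLexp, hLim⟩ := hL z hz
    have hzbc : z ∉ segment ℝ b c := fun h => hbc h hz
    have hzb : z - b ≠ 0 := sub_ne_zero.2 fun h => hzbc (h ▸ left_mem_segment ℝ b c)
    have hzc : z - c ≠ 0 := sub_ne_zero.2 fun h => hzbc (h ▸ right_mem_segment ℝ b c)
    have hslit := sub_div_sub_mem_slitPlane hzbc
    refine ⟨hLd.add (((differentiableAt_id.sub_const b).div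
      (differentiableAt_id.sub_const c) hzc).clog hslit), ?_, ?_⟩
    · rw [exp_add, hLexp, exp_log (slitPlane_ne_zero hslit), div_mul_div_cancel₀ hzb]
    · rw [add_im, log_im]
      push_cast
      linarith [abs_add_le (L z).im (arg ((z - b) / (z - c))), abs_arg_le_pi ((z - b) / (z - c))]

theorem re_exp_div_natCast_pos {w : ℂ} {n M : ℕ} (hw : |w.im| ≤ n * π) (hM : 2 * n < M) :
    0 < (exp (w / M)).re := by
  have hM' : (2 * n : ℝ) < M := by exact_mod_cast hM
  rw [exp_re]
  refine mul_pos (Real.exp_pos _) (Real.cos_pos_of_mem_Ioo (abs_lt.1 ?_))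
  rw [div_natCast_im, abs_div, Nat.abs_cast, div_lt_iff₀ (by linarith)]
  nlinarith [Real.pi_pos]

theorem exists_root_sub_div_sub_of_reflTransGen {W : Set ℂ} {a b : ℂ} (ha : a ∉ W)
    (hab : ReflTransGen (fun x y => segment ℝ x y ⊆ Wᶜ) a b) :
    ∃ (h : ℂ → ℂ) (M : ℕ), M ≠ 0 ∧ ∀ z ∈ W, DifferentiableAt ℂ h z ∧ 0 < (h z).re ∧
      h z ^ M = (z - a) / (z - b) := by
  obtain ⟨L, n, hL⟩ := exists_log_sub_div_sub_of_reflTransGen ha hab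
  refine ⟨fun z => exp (L z / (2 * n + 1 : ℕ)), 2 * n + 1, by omega, fun z hz => ?_⟩
  obtain ⟨hd, hexp, him⟩ := hL z hz
  refine ⟨(hd.div_const _).cexp, re_exp_div_natCast_pos him (by omega), ?_⟩
  rw [← exp_nat_mul, mul_div_cancel₀ _ (Nat.cast_ne_zero.2 (by omega)), hexp]

theorem tendsto_nhds_zero_of_tendsto_pow {α 𝕜 : Type*} [NormedDivisionRing 𝕜] {l : Filter α}
    {f : α → 𝕜} {M : ℕ} (hM : M ≠ 0) (h : Tendsto (fun x => f x ^ M) l (𝓝 0)) :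
    Tendsto f l (𝓝 0) := by
  rw [tendsto_zero_iff_norm_tendsto_zero] at h ⊢
  have := h.rpow_const (p := (M : ℝ)⁻¹) (Or.inr (by positivity))
  simp_rw [norm_pow, Real.pow_rpow_inv_natCast (norm_nonneg _) hM] at this
  simpa [Real.zero_rpow (inv_ne_zero (Nat.cast_ne_zero.2 hM))] using this

theorem inv_one_add_mem_ball {w : ℂ} (hw : 0 < w.re) : (1 + w)⁻¹ ∈ ball (1 / 2 : ℂ) (1 / 2) := by
  have hw0 : 1 + w ≠ 0 := ne_of_apply_ne re (by rw [add_re, one_re, zero_re]; linarith)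
  have hlt : ‖1 - w‖ < ‖1 + w‖ := by
    rw [← sq_lt_sq₀ (norm_nonneg _) (norm_nonneg _), Complex.sq_norm, Complex.sq_norm,
      normSq_apply, normSq_apply]
    simp only [sub_re, add_re, one_re, sub_im, add_im, one_im]
    nlinarith
  rw [mem_ball, dist_eq_norm]
  calc ‖(1 + w)⁻¹ - 1 / 2‖ = ‖1 - w‖ / (2 * ‖1 + w‖) := by
        rw [show (1 + w)⁻¹ - 1 / 2 = (1 - w) / (2 * (1 + w)) by field_simp; ring,
          norm_div, norm_mul, Complex.norm_two]
    _ < ‖1 + w‖ / (2 * ‖1 + w‖) := by gcongr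
    _ = 1 / 2 := by field_simp [norm_ne_zero_iff.2 hw0]

/-- If `h` is a root of `(z - z₁) / (z - z₂)` with positive real part, `1 / (1 + h)` has limits
`1` at `z₁` and `0` at `z₂`. -/
noncomputable def diskMapOfRoot (z₁ z₂ : ℂ) (h : ℂ → ℂ) (z : ℂ) : ℂ :=
  if z = z₁ then 1 else if z = z₂ then 0 else (1 + h z)⁻¹

section DiskMapOfRoot

variable {z₁ z₂ z : ℂ} {h : ℂ → ℂ} {S : Set ℂ} {M : ℕ}

@[simp]
theorem diskMapOfRoot_left : diskMapOfRoot z₁ z₂ h z₁ = 1 := if_pos rfl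

theorem diskMapOfRoot_right (hne : z₁ ≠ z₂) : diskMapOfRoot z₁ z₂ h z₂ = 0 := by
  simp [diskMapOfRoot, hne.symm]

theorem diskMapOfRoot_of_notMem (hz : z ∉ ({z₁, z₂} : Set ℂ)) :
    diskMapOfRoot z₁ z₂ h z = (1 + h z)⁻¹ := by
  simp only [mem_insert_iff, mem_singleton_iff, not_or] at hz
  simp [diskMapOfRoot, hz.1, hz.2]

theorem mapsTo_diskMapOfRoot (hre : ∀ z ∈ S \ {z₁, z₂}, 0 < (h z).re) :
    MapsTo (diskMapOfRoot z₁ z₂ h) (S \ {z₁, z₂}) (ball (1 / 2) (1 / 2)) := fun z hz => by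
  rw [diskMapOfRoot_of_notMem hz.2]
  exact inv_one_add_mem_ball (hre z hz)

theorem image_diskMapOfRoot_subset (hne : z₁ ≠ z₂) (hre : ∀ z ∈ S \ {z₁, z₂}, 0 < (h z).re) :
    diskMapOfRoot z₁ z₂ h '' S ⊆ {0, 1} ∪ ball (1 / 2) (1 / 2) := by
  rintro _ ⟨z, hz, rfl⟩
  by_cases h12 : z ∈ ({z₁, z₂} : Set ℂ)
  · rcases h12 with rfl | rfl
    · simp
    · simp [diskMapOfRoot_right hne]
  · exact Or.inr (mapsTo_diskMapOfRoot hre ⟨hz, h12⟩)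

theorem differentiableAt_diskMapOfRoot (hz : z ∉ ({z₁, z₂} : Set ℂ))
    (hd : DifferentiableAt ℂ h z) (hre : 0 < (h z).re) :
    DifferentiableAt ℂ (diskMapOfRoot z₁ z₂ h) z := by
  have hev : diskMapOfRoot z₁ z₂ h =ᶠ[𝓝 z] fun w => (1 + h w)⁻¹ :=
    eventually_of_mem ((toFinite _).isClosed.isOpen_compl.mem_nhds hz)
      fun w hw => diskMapOfRoot_of_notMem hw
  have h1 : 1 + h z ≠ 0 := ne_of_apply_ne re (by rw [add_re, one_re, zero_re]; linarith)
  exact hev.differentiableAt_iff.2 (((differentiableAt_const 1).add hd).inv h1)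

theorem tendsto_diskMapOfRoot_left (hne : z₁ ≠ z₂) (hM : M ≠ 0)
    (hpow : ∀ z ∈ S \ {z₁, z₂}, h z ^ M = (z - z₁) / (z - z₂)) :
    Tendsto (diskMapOfRoot z₁ z₂ h) (𝓝[S \ {z₁, z₂}] z₁) (𝓝 1) := by
  have hμ : Tendsto (fun z => (z - z₁) / (z - z₂)) (𝓝[S \ {z₁, z₂}] z₁) (𝓝 0) := by
    have hc : ContinuousAt (fun z => (z - z₁) / (z - z₂)) z₁ :=
      (continuousAt_id.sub continuousAt_const).div (continuousAt_id.sub continuousAt_const)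
        (sub_ne_zero.2 hne)
    simpa using hc.tendsto.mono_left nhdsWithin_le_nhds
  have h0 : Tendsto h (𝓝[S \ {z₁, z₂}] z₁) (𝓝 0) :=
    tendsto_nhds_zero_of_tendsto_pow hM
      (hμ.congr' (eventually_nhdsWithin_of_forall fun z hz => (hpow z hz).symm))
  have := (tendsto_const_nhds (x := (1 : ℂ))).add h0 |>.inv₀ (by simp)
  refine (this.congr' (eventually_nhdsWithin_of_forall fun z hz => ?_)).trans (by simp)
  exact (diskMapOfRoot_of_notMem hz.2).symm

theorem tendsto_diskMapOfRoot_right (hne : z₁ ≠ z₂) (hM : M ≠ 0)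
    (hre : ∀ z ∈ S \ {z₁, z₂}, 0 < (h z).re)
    (hpow : ∀ z ∈ S \ {z₁, z₂}, h z ^ M = (z - z₁) / (z - z₂)) :
    Tendsto (diskMapOfRoot z₁ z₂ h) (𝓝[S \ {z₁, z₂}] z₂) (𝓝 0) := by
  have hμ : Tendsto (fun z => (z - z₂) / (z - z₁)) (𝓝[S \ {z₁, z₂}] z₂) (𝓝 0) := by
    have hc : ContinuousAt (fun z => (z - z₂) / (z - z₁)) z₂ :=
      (continuousAt_id.sub continuousAt_const).div (continuousAt_id.sub continuousAt_const)
        (sub_ne_zero.2 hne.symm)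
    simpa using hc.tendsto.mono_left nhdsWithin_le_nhds
  have h0 : Tendsto (fun z => (h z)⁻¹) (𝓝[S \ {z₁, z₂}] z₂) (𝓝 0) :=
    tendsto_nhds_zero_of_tendsto_pow hM
      (hμ.congr' (eventually_nhdsWithin_of_forall fun z hz => by
        simp only [inv_pow, hpow z hz, inv_div]))
  have := h0.div ((tendsto_const_nhds (x := (1 : ℂ))).add h0) (by simp)
  refine (this.congr' (eventually_nhdsWithin_of_forall fun z hz => ?_)).trans (by simp)
  have hh : h z ≠ 0 := fun h0 => by simpa [h0] using hre z hz
  rw [diskMapOfRoot_of_notMem hz.2, Pi.div_apply]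
  field_simp
  ring

theorem continuousOn_diskMapOfRoot (hne : z₁ ≠ z₂) (hM : M ≠ 0)
    (hd : ∀ z ∈ S \ {z₁, z₂}, DifferentiableAt ℂ h z)
    (hre : ∀ z ∈ S \ {z₁, z₂}, 0 < (h z).re)
    (hpow : ∀ z ∈ S \ {z₁, z₂}, h z ^ M = (z - z₁) / (z - z₂)) :
    ContinuousOn (diskMapOfRoot z₁ z₂ h) S := by
  intro z hz
  by_cases h12 : z ∈ ({z₁, z₂} : Set ℂ)
  · have hS : S ⊆ insert z₁ (insert z₂ (S \ {z₁, z₂})) := by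
      simpa only [insert_union, singleton_union] using
        sdiff_subset_iff.1 (subset_refl (S \ {z₁, z₂}))
    refine (continuousWithinAt_insert.2 (continuousWithinAt_insert.2 ?_)).mono hS
    rcases h12 with rfl | rfl
    · simpa [ContinuousWithinAt] using tendsto_diskMapOfRoot_left hne hM hpow
    · simpa [ContinuousWithinAt, diskMapOfRoot_right hne] using
        tendsto_diskMapOfRoot_right hne hM hre hpow
  · exact (differentiableAt_diskMapOfRoot h12 (hd z ⟨hz, h12⟩)
      (hre z ⟨hz, h12⟩)).continuousAt.continuousWithinAt

theorem norm_diskMapOfRoot_le_one (hne : z₁ ≠ z₂) (hre : ∀ z ∈ S \ {z₁, z₂}, 0 < (h z).re)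
    (hz : z ∈ S) : ‖diskMapOfRoot z₁ z₂ h z‖ ≤ 1 := by
  have hsub : {0, 1} ∪ ball (1 / 2 : ℂ) (1 / 2) ⊆ closedBall 0 1 :=
    union_subset (by simp [insert_subset_iff])
      (ball_subset_closedBall.trans (closedBall_subset_closedBall' (by norm_num)))
  simpa using hsub (image_diskMapOfRoot_subset hne hre (mem_image_of_mem _ hz))

theorem differentiableOn_diskMapOfRoot (hz₁ : z₁ ∉ interior S) (hz₂ : z₂ ∉ interior S)
    (hd : ∀ z ∈ S \ {z₁, z₂}, DifferentiableAt ℂ h z)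
    (hre : ∀ z ∈ S \ {z₁, z₂}, 0 < (h z).re) :
    DifferentiableOn ℂ (diskMapOfRoot z₁ z₂ h) (interior S) := fun z hz => by
  have hz12 : z ∉ ({z₁, z₂} : Set ℂ) := by
    rintro (rfl | rfl)
    exacts [hz₁ hz, hz₂ hz]
  have hzS : z ∈ S \ {z₁, z₂} := ⟨interior_subset hz, hz12⟩
  exact (differentiableAt_diskMapOfRoot hz12 (hd z hzS) (hre z hzS)).differentiableWithinAt

theorem injOn_diskMapOfRoot (hne : z₁ ≠ z₂) (hre : ∀ z ∈ S \ {z₁, z₂}, 0 < (h z).re)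
    (hpow : ∀ z ∈ S \ {z₁, z₂}, h z ^ M = (z - z₁) / (z - z₂)) :
    InjOn (diskMapOfRoot z₁ z₂ h) S := by
  refine (injOn_union disjoint_sdiff_right).2 ⟨?_, fun u hu v hv huv => ?_, ?_⟩ |>.mono
    (sdiff_subset_iff.1 (subset_refl (S \ {z₁, z₂})))
  · simp [diskMapOfRoot_right hne]
  · rw [diskMapOfRoot_of_notMem hu.2, diskMapOfRoot_of_notMem hv.2, inv_inj,
      add_right_inj] at huv
    have hu2 : u ∈ ({z₂} : Set ℂ)ᶜ := fun h => hu.2 (Or.inr h)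
    have hv2 : v ∈ ({z₂} : Set ℂ)ᶜ := fun h => hv.2 (Or.inr h)
    exact injOn_sub_div_sub hne hu2 hv2 (by simp only [← hpow u hu, ← hpow v hv, huv])
  · intro u hu v hv huv
    have hball := mapsTo_diskMapOfRoot hre hv
    rw [← huv] at hball
    rcases hu with rfl | rfl
    · norm_num [mem_ball, dist_eq_norm] at hball
    · norm_num [diskMapOfRoot_right hne, mem_ball] at hball

end DiskMapOfRoot

theorem exists_conformal_homeomorphism_zero_one_general (K : Set ℂ) (hK : IsCompact K)
    (hKc : IsConnected Kᶜ)
    (z₁ z₂ : ℂ) (hne : z₁ ≠ z₂)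
    (hca₁ : ∃ c : ℂ, ∃ r : ℝ, 0 < r ∧ Metric.closedBall c r ∩ K = {z₁})
    (hca₂ : ∃ c : ℂ, ∃ r : ℝ, 0 < r ∧ Metric.closedBall c r ∩ K = {z₂}) :
    ∃ g : ℂ → ℂ, ContinuousOn g K ∧ DifferentiableOn ℂ g (interior K) ∧
      sSup ((fun w => ‖g w‖) '' K) = 1 ∧
      Set.InjOn g K ∧
      g z₁ = 1 ∧ g z₂ = 0 ∧
      g '' (K \ {z₁, z₂}) ⊆ Metric.ball (1 / 2 : ℂ) (1 / 2) ∧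
      g '' K ⊆ {0, 1} ∪ Metric.ball (1 / 2 : ℂ) (1 / 2) := by
  obtain ⟨c₁, r₁, hr₁, hK₁⟩ := hca₁
  obtain ⟨c₂, r₂, hr₂, hK₂⟩ := hca₂
  have hz₁ : z₁ ∈ K := (hK₁.ge (mem_singleton z₁)).2
  obtain ⟨h, M, hM, hroot⟩ := exists_root_sub_div_sub_of_reflTransGen (by simp)
    (reflTransGen_segment_subset_compl_diff_pair hK.isClosed hKc.isPreconnected hr₁ hr₂ hK₁ hK₂)
  have hd z hz := (hroot z hz).1
  have hre z hz := (hroot z hz).2.1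
  have hpow z hz := (hroot z hz).2.2
  exact ⟨diskMapOfRoot z₁ z₂ h, continuousOn_diskMapOfRoot hne hM hd hre hpow,
    differentiableOn_diskMapOfRoot (notMem_interior_of_closedBall_inter_eq hr₁ hK₁)
      (notMem_interior_of_closedBall_inter_eq hr₂ hK₂) hd hre,
    IsGreatest.csSup_eq ⟨⟨z₁, hz₁, by simp⟩,
      forall_mem_image.2 fun _ hz => norm_diskMapOfRoot_le_one hne hre hz⟩,
    injOn_diskMapOfRoot hne hre hpow, diskMapOfRoot_left, diskMapOfRoot_right hne,
    (mapsTo_diskMapOfRoot hre).image_subset, image_diskMapOfRoot_subset hne hre⟩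

/-- Existence of a norm-one conformal homeomorphism in `A(K)` mapping `z₁` to
`1`, `z₂` to `0`, and the rest of `K` into the open disk `D(1/2;1/2)`. -/
theorem exists_conformal_homeomorphism_zero_one (K : Set ℂ) (hK : IsCompact K)
    (hKc : IsConnected Kᶜ) (hint : (interior K).Nonempty)
    (z₁ z₂ : ℂ) (hne : z₁ ≠ z₂)
    (hz₁ : z₁ ∈ frontier K) (hz₂ : z₂ ∈ frontier K)
    (hz₁I : ∀ U : Set ℂ, IsOpen U → z₁ ∈ U → (U ∩ interior K).Nonempty)
    (hz₂I : ∀ U : Set ℂ, IsOpen U → z₂ ∈ U → (U ∩ interior K).Nonempty)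
    (hca₁ : ∃ c : ℂ, ∃ r : ℝ, 0 < r ∧ Metric.closedBall c r ∩ K = {z₁})
    (hca₂ : ∃ c : ℂ, ∃ r : ℝ, 0 < r ∧ Metric.closedBall c r ∩ K = {z₂}) :
    ∃ g : ℂ → ℂ, ContinuousOn g K ∧ DifferentiableOn ℂ g (interior K) ∧
      sSup ((fun w => ‖g w‖) '' K) = 1 ∧
      Set.InjOn g K ∧
      g z₁ = 1 ∧ g z₂ = 0 ∧
      g '' (K \ {z₁, z₂}) ⊆ Metric.ball (1 / 2 : ℂ) (1 / 2) ∧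
      g '' K ⊆ {0, 1} ∪ Metric.ball (1 / 2 : ℂ) (1 / 2) :=
  exists_conformal_homeomorphism_zero_one_general K hK hKc z₁ z₂ hne hca₁ hca₂
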